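/- arXiv:1208.2683 — 3 statements merged into one kernel-verified Lean document; each statement's English description precedes it below -/
import Mathlib

section
/- The sequence of n-th roots of the n-th harmonic number is strictly decreasing from n = 2 onwards; that is, for every integer n ≥ 2, (H_n)^(1/n) > (H_{n+1})^(1/(n+1)), where H_n = ∑_{k=1}^n 1/k. Equivalently, H_n^(n+1) > H_{n+1}^n for all n ≥ 2. -/
/-!
Write `H = H_n`, so that `H_{n+1} = H (1 + x)` with `x = 1 / ((n + 1) H)`. The claim becomes
`(1 + x) ^ n < H`, and `(1 + x) ^ n ≤ exp (n x) < exp (1 / H)`. Once `H ≥ 2` (that is,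
`n ≥ 4`), `exp (1 / H) ≤ exp (1 / 2) < 2 ≤ H`; the cases `n = 2, 3` are checked by
computation.
-/

open Finset Real

lemma one_add_inv_pow_lt_of_exp_inv_le {H : ℝ} (hH : 0 < H) (hexp : exp H⁻¹ ≤ H) (n : ℕ) :
    (1 + ((n + 1) * H)⁻¹) ^ n < H := by
  set x := ((n + 1 : ℝ) * H)⁻¹ with hx
  have hnx : n * x < H⁻¹ := by
    rw [hx, mul_inv, ← mul_assoc, ← div_eq_mul_inv]
    exact mul_lt_of_lt_one_left (inv_pos.2 hH) ((div_lt_one (by positivity)).2 (by linarith))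
  calc (1 + x) ^ n ≤ exp x ^ n :=
        pow_le_pow_left₀ (by positivity) (by linarith [add_one_le_exp x]) n
    _ = exp (n * x) := (exp_nat_mul x n).symm
    _ < exp H⁻¹ := exp_lt_exp.2 hnx
    _ ≤ H := hexp

lemma add_inv_succ_pow_lt_pow_succ_of_exp_inv_le {H : ℝ} (hH : 0 < H) (hexp : exp H⁻¹ ≤ H)
    (n : ℕ) : (H + (n + 1 : ℝ)⁻¹) ^ n < H ^ (n + 1) := by
  have hfactor : H + (n + 1 : ℝ)⁻¹ = H * (1 + ((n + 1) * H)⁻¹) := by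
    field_simp
  rw [hfactor, mul_pow, pow_succ]
  exact mul_lt_mul_of_pos_left (one_add_inv_pow_lt_of_exp_inv_le hH hexp n) (by positivity)

lemma exp_inv_le_self_of_two_le {H : ℝ} (hH : 2 ≤ H) : exp H⁻¹ ≤ H := by
  have hhalf : exp (1 / 2) < 2 := by
    have hsq : exp (1 / 2) ^ 2 = exp 1 := by rw [← exp_nat_mul]; norm_num
    nlinarith [exp_one_lt_d9, exp_pos (1 / 2)]
  have hinv : H⁻¹ ≤ 1 / 2 := by
    rw [one_div]; exact inv_anti₀ (by norm_num) hH
  linarith [exp_le_exp.2 hinv]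

lemma harmonic_monotone : Monotone harmonic :=
  monotone_nat_of_le_succ fun n => by
    rw [harmonic_succ]
    exact le_add_of_nonneg_right (by positivity)

lemma two_le_harmonic {n : ℕ} (hn : 4 ≤ n) : 2 ≤ harmonic n :=
  le_trans (by norm_num [harmonic, Finset.sum_range_succ]) (harmonic_monotone hn)

lemma harmonic_succ_pow_lt_pow_succ {n : ℕ} (hn : 2 ≤ n) :
    harmonic (n + 1) ^ n < harmonic n ^ (n + 1) := by
  rcases lt_or_ge n 4 with hsmall | hlarge
  · interval_cases n <;> norm_num [harmonic, Finset.sum_range_succ]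
  · have hH : (2 : ℝ) ≤ harmonic n := by exact_mod_cast two_le_harmonic hlarge
    have key := add_inv_succ_pow_lt_pow_succ_of_exp_inv_le (by linarith)
      (exp_inv_le_self_of_two_le hH) n
    rw [harmonic_succ, ← Rat.cast_lt (K := ℝ)]
    push_cast
    exact key

theorem harmonic_nth_root_strict_anti (n : ℕ) (hn : 2 ≤ n) :
    (∑ k ∈ Finset.Icc 1 (n+1), (1 : ℝ) / k) ^ n <
      (∑ k ∈ Finset.Icc 1 n, (1 : ℝ) / k) ^ (n + 1) := by
  have hsum (m : ℕ) : ∑ k ∈ Finset.Icc 1 m, (1 : ℝ) / k = harmonic m := by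
    simp [harmonic_eq_sum_Icc, one_div]
  rw [hsum, hsum]
  exact_mod_cast harmonic_succ_pow_lt_pow_succ hn
end

section
/- For every positive integer m, the sequence ((H_n^{(m)})^(1/n))_{n≥2} is strictly decreasing, i.e., (H_n^{(m)})^(n+1) > (H_{n+1}^{(m)})^n for all n ≥ 2, where H_n^{(m)} = ∑_{k=1}^n 1/k^m. -/
/-!
Write `t = H_n^{(m)}` and `a = 1/(n+1)^m`, so that `H_{n+1}^{(m)} = t + a`. The homogeneous
Bernoulli inequality `(t + a)^n (t - n a) ≤ t^{n+1}` shows `(t + a)^n < t^{n+1}` as soon as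
`t - n a > 1`, i.e. `n/(n+1)^m < H_n^{(m)} - 1`. Bounding `H_n^{(m)} - 1` below by
`1/2^m + (n-2)/n^m` gives this except for `m = 1, n = 2`, which is checked directly.
-/

open Finset

noncomputable def genHarmonic (m n : ℕ) : ℝ :=
  ∑ k ∈ Icc 1 n, (1 : ℝ) / (k : ℝ) ^ m

lemma add_pow_mul_sub_le_pow_succ {t a : ℝ} (ht : 0 ≤ t) (hta : 0 ≤ t + a) (n : ℕ) :
    (t + a) ^ n * (t - n * a) ≤ t ^ (n + 1) := by
  induction n with
  | zero => simp
  | succ n ih =>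
    have hstep : (t + a) ^ (n + 1) * (t - (n + 1 : ℕ) * a)
        = t * ((t + a) ^ n * (t - n * a)) - (n + 1) * a ^ 2 * (t + a) ^ n := by
      push_cast; ring
    have hdefect : 0 ≤ (n + 1) * a ^ 2 * (t + a) ^ n := by positivity
    rw [hstep, pow_succ t (n + 1)]
    nlinarith [mul_le_mul_of_nonneg_left ih ht]

lemma add_pow_lt_pow_succ {t a : ℝ} (n : ℕ) (ha : 0 ≤ a) (h : 1 + n * a < t) :
    (t + a) ^ n < t ^ (n + 1) := by
  have hna : 0 ≤ n * a := by positivity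
  have hpos : 0 < (t + a) ^ n := pow_pos (by linarith) n
  calc (t + a) ^ n < (t + a) ^ n * (t - n * a) := lt_mul_of_one_lt_right hpos (by linarith)
    _ ≤ t ^ (n + 1) := add_pow_mul_sub_le_pow_succ (by linarith) (by linarith) n

lemma genHarmonic_succ (m n : ℕ) :
    genHarmonic m (n + 1) = genHarmonic m n + 1 / ((n : ℝ) + 1) ^ m := by
  rw [genHarmonic, sum_Icc_succ_top (by omega), genHarmonic]
  push_cast
  rfl

lemma one_add_div_two_pow_add_le_genHarmonic (m : ℕ) {n : ℕ} (hn : 2 ≤ n) :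
    1 + 1 / 2 ^ m + ((n : ℝ) - 2) / (n : ℝ) ^ m ≤ genHarmonic m n := by
  have hsplit : Icc 1 n = insert 1 (insert 2 (Icc 3 n)) := by
    ext k; simp only [mem_Icc, mem_insert]; omega
  have htail : ((Icc 3 n).card : ℝ) * (1 / (n : ℝ) ^ m) ≤ ∑ k ∈ Icc 3 n, (1 : ℝ) / (k : ℝ) ^ m := by
    rw [← nsmul_eq_mul]
    refine card_nsmul_le_sum _ _ _ fun k hk => ?_
    have hk : 3 ≤ k ∧ k ≤ n := mem_Icc.mp hk
    gcongr
    · have : (0 : ℝ) < k := by exact_mod_cast (by omega : 0 < k)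
      positivity
    · exact_mod_cast hk.2
  have hcard : ((Icc 3 n).card : ℝ) = n - 2 := by
    rw [Nat.card_Icc, show n + 1 - 3 = n - 2 by omega, Nat.cast_sub hn]
    norm_num
  rw [hcard, mul_one_div] at htail
  rw [genHarmonic, hsplit, sum_insert (by simp), sum_insert (by simp)]
  simp only [Nat.cast_one, one_pow, div_one, Nat.cast_ofNat]
  linarith

lemma mul_two_pow_lt_succ_pow {n m : ℕ} (hn : 2 ≤ n) (hm : 2 ≤ m) : n * 2 ^ m < (n + 1) ^ m := by
  obtain ⟨j, rfl⟩ := Nat.exists_eq_add_of_le' hm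
  have hsq : 4 * n < (n + 1) ^ 2 := by nlinarith
  calc n * 2 ^ (j + 2) = 4 * n * 2 ^ j := by ring
    _ < (n + 1) ^ 2 * (n + 1) ^ j :=
        Nat.mul_lt_mul_of_lt_of_le hsq (Nat.pow_le_pow_left (by omega) j) (by positivity)
    _ = (n + 1) ^ (j + 2) := by ring

lemma one_add_div_succ_pow_lt_genHarmonic {m n : ℕ} (hm : 1 ≤ m) (hn : 2 ≤ n)
    (hmn : (m, n) ≠ (1, 2)) : 1 + (n : ℝ) / ((n : ℝ) + 1) ^ m < genHarmonic m n := by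
  have hbound := one_add_div_two_pow_add_le_genHarmonic m hn
  have hn2 : (2 : ℝ) ≤ n := by exact_mod_cast hn
  obtain rfl | hm2 := eq_or_lt_of_le hm
  · have hn3 : (3 : ℝ) ≤ n := by
      have : 3 ≤ n := by by_contra; exact hmn (Prod.ext rfl (by omega))
      exact_mod_cast this
    have key : (n : ℝ) / (n + 1) < 1 / 2 + (n - 2) / n := by
      rw [div_add_div _ _ (by norm_num) (by positivity), div_lt_div_iff₀ (by positivity) (by positivity)]
      nlinarith
    simp only [pow_one] at hbound ⊢
    linarith
  · have key : (n : ℝ) / (n + 1) ^ m < 1 / 2 ^ m := by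
      rw [div_lt_div_iff₀ (by positivity) (by positivity), one_mul]
      exact_mod_cast mul_two_pow_lt_succ_pow hn hm2
    have hrest : 0 ≤ ((n : ℝ) - 2) / (n : ℝ) ^ m := div_nonneg (by linarith) (by positivity)
    linarith

theorem harmonic_order_m_nth_root_strict_anti (m : ℕ) (hm : 1 ≤ m) (n : ℕ) (hn : 2 ≤ n) :
    (∑ k ∈ Finset.Icc 1 (n+1), (1 : ℝ) / (k : ℝ) ^ m) ^ n <
      (∑ k ∈ Finset.Icc 1 n, (1 : ℝ) / (k : ℝ) ^ m) ^ (n + 1) := by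
  change genHarmonic m (n + 1) ^ n < genHarmonic m n ^ (n + 1)
  by_cases hmn : (m, n) = (1, 2)
  · obtain ⟨rfl, rfl⟩ := Prod.mk.inj hmn
    norm_num [genHarmonic, sum_Icc_succ_top]
  · rw [genHarmonic_succ]
    refine add_pow_lt_pow_succ n (by positivity) ?_
    rw [mul_one_div]
    exact one_add_div_succ_pow_lt_genHarmonic hm hn hmn
end

section
/- For all n ≥ 0, g_n = ∑_{k=0}^n C(n,k)·f_k, where g_n = ∑_{k=0}^n C(n,k)^2·C(2k,k) and f_k = ∑_{j=0}^k C(k,j)^3 is the k-th Franel number. -/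
/-!
Since `(x + y + xy)(1 + x + y) = (1 + x)(1 + y)(x + y) + xy`, the coefficient of `xⁿyⁿ` in the
`n`-th power of either side can be computed in two ways. On the left, expanding both factors
in powers of `x + y` and using homogeneity of `(x + y)ᵐ` gives `gₙ`. On the right, the binomial
theorem reduces it to `∑ C(n,k) [xᵏyᵏ]((1 + x)(1 + y)(x + y))ᵏ`, and that coefficient is the
Franel number `f_k = ∑ C(k,a) C(k,b) C(k,c)` over `a + c = k = b + (k - c)`.
-/

open Polynomial Finset

namespace Franel

variable {R : Type*} [CommSemiring R]

/-- The coefficient of `x^a y^b`, where `x = X` and `y = C X`. -/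
noncomputable def coeff₂ (p : R[X][X]) (a b : ℕ) : R := (p.coeff a).coeff b

lemma coeff₂_sum {ι : Type*} (s : Finset ι) (f : ι → R[X][X]) (a b : ℕ) :
    coeff₂ (∑ i ∈ s, f i) a b = ∑ i ∈ s, coeff₂ (f i) a b := by
  simp only [coeff₂, finsetSum_coeff]

lemma coeff₂_mul_natCast (p : R[X][X]) (c a b : ℕ) :
    coeff₂ (p * (c : R[X][X])) a b = coeff₂ p a b * c := by
  simp only [coeff₂, coeff_mul_natCast]

lemma coeff₂_X_pow_mul_C_X_pow_mul (i j : ℕ) (p : R[X][X]) (a b : ℕ) :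
    coeff₂ (X ^ i * C X ^ j * p) a b =
      if i ≤ a ∧ j ≤ b then coeff₂ p (a - i) (b - j) else 0 := by
  rw [coeff₂, ← map_pow, mul_assoc, coeff_X_pow_mul']
  split_ifs with hi hij hij
  · rw [coeff_C_mul, coeff_X_pow_mul', if_pos hij.2, coeff₂]
  · rw [coeff_C_mul, coeff_X_pow_mul', if_neg (by tauto)]
  · exact absurd hij.1 hi
  · rfl

lemma coeff₂_X_add_C_X_pow (m a b : ℕ) :
    coeff₂ ((X + C X : R[X][X]) ^ m) a b = if a + b = m then (m.choose a : R) else 0 := by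
  rw [coeff₂, coeff_X_add_C_pow, coeff_mul_natCast, coeff_X_pow]
  by_cases ha : a ≤ m
  · simp only [show b = m - a ↔ a + b = m by omega]
    split_ifs <;> simp
  · simp [Nat.choose_eq_zero_of_lt (not_le.1 ha)]

lemma coeff₂_pow_add_X_mul_C_X (p : R[X][X]) (n : ℕ) :
    coeff₂ ((p + X * C X) ^ n) n n = ∑ k ∈ range (n + 1), n.choose k * coeff₂ (p ^ k) k k := by
  rw [add_pow, coeff₂_sum]
  refine sum_congr rfl fun k hk => ?_
  have hkn : k ≤ n := Nat.lt_succ_iff.1 (mem_range.1 hk)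
  rw [coeff₂_mul_natCast, mul_pow, mul_comm (p ^ k), coeff₂_X_pow_mul_C_X_pow_mul,
    if_pos ⟨n.sub_le k, n.sub_le k⟩, Nat.sub_sub_self hkn, mul_comm]

lemma coeff₂_X_pow_mul_C_X_pow_mul_X_add_C_X_pow (i j m a b : ℕ) :
    coeff₂ (X ^ i * C X ^ j * (X + C X) ^ m : R[X][X]) a b =
      if i ≤ a ∧ j ≤ b ∧ a + b = i + j + m then (m.choose (a - i) : R) else 0 := by
  rw [coeff₂_X_pow_mul_C_X_pow_mul]
  by_cases hij : i ≤ a ∧ j ≤ b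
  · rw [if_pos hij, coeff₂_X_add_C_X_pow]
    simp only [hij, true_and, show a - i + (b - j) = m ↔ a + b = i + j + m by omega]
  · rw [if_neg hij, if_neg fun h => hij ⟨h.1, h.2.1⟩]

lemma coeff₂_franel (k : ℕ) :
    coeff₂ (((1 + X) * (1 + C X) * (X + C X) : R[X][X]) ^ k) k k =
      ∑ j ∈ range (k + 1), (k.choose j : R) ^ 3 := by
  have expand : ((1 + X) * (1 + C X) * (X + C X) : R[X][X]) ^ k =
      ∑ i ∈ range (k + 1), ∑ j ∈ range (k + 1),
        X ^ i * C X ^ j * (X + C X) ^ k * ((k.choose i * k.choose j : ℕ) : R[X][X]) := by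
    rw [mul_pow, mul_pow, add_comm 1 X, add_comm 1 (C X), add_pow, add_pow, sum_mul_sum]
    simp only [sum_mul]
    refine sum_congr rfl fun i _ => sum_congr rfl fun j _ => ?_
    push_cast
    ring
  rw [expand, coeff₂_sum]
  refine sum_congr rfl fun i hi => ?_
  have hik : i ≤ k := Nat.lt_succ_iff.1 (mem_range.1 hi)
  rw [coeff₂_sum, sum_eq_single (k - i)]
  · rw [coeff₂_mul_natCast, coeff₂_X_pow_mul_C_X_pow_mul_X_add_C_X_pow, if_pos (by omega),
      Nat.choose_symm hik]
    push_cast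
    ring
  · intro j _ hj
    rw [coeff₂_mul_natCast, coeff₂_X_pow_mul_C_X_pow_mul_X_add_C_X_pow, if_neg (by omega),
      zero_mul]
  · exact fun h => absurd (mem_range.2 (by omega)) h

lemma coeff₂_pow_mul_pow (n : ℕ) :
    coeff₂ ((X + C X + X * C X) ^ n * (X + C X + 1) ^ n : R[X][X]) n n =
      ∑ c ∈ range (n + 1), ((n.choose c) ^ 2 * (2 * c).choose c : R) := by
  have expand : ((X + C X + X * C X) ^ n * (X + C X + 1) ^ n : R[X][X]) =
      ∑ c ∈ range (n + 1), ∑ d ∈ range (n + 1),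
        X ^ (n - c) * C X ^ (n - c) * (X + C X) ^ (c + d) *
          ((n.choose c * n.choose d : ℕ) : R[X][X]) := by
    rw [add_pow, add_pow, sum_mul_sum]
    refine sum_congr rfl fun c _ => sum_congr rfl fun d _ => ?_
    push_cast
    ring
  rw [expand, coeff₂_sum]
  refine sum_congr rfl fun c hc => ?_
  have hcn : c ≤ n := Nat.lt_succ_iff.1 (mem_range.1 hc)
  rw [coeff₂_sum, sum_eq_single c]
  · rw [coeff₂_mul_natCast, coeff₂_X_pow_mul_C_X_pow_mul_X_add_C_X_pow, if_pos (by omega),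
      Nat.sub_sub_self hcn, two_mul]
    push_cast
    ring
  · intro d _ hd
    rw [coeff₂_mul_natCast, coeff₂_X_pow_mul_C_X_pow_mul_X_add_C_X_pow, if_neg (by omega),
      zero_mul]
  · exact fun h => absurd (mem_range.2 (by omega)) h

end Franel

open Franel

theorem g_eq_binomial_transform_of_franel (n : ℕ) :
    (∑ k ∈ Finset.range (n+1), (n.choose k)^2 * (2*k).choose k) =
      ∑ k ∈ Finset.range (n+1),
        n.choose k * (∑ j ∈ Finset.range (k+1), (k.choose j)^3) := by
  have factorization : ((X + C X + X * C X) * (X + C X + 1) : ℕ[X][X]) =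
      (1 + X) * (1 + C X) * (X + C X) + X * C X := by
    ring
  have h := coeff₂_pow_mul_pow (R := ℕ) n
  rw [← mul_pow, factorization, coeff₂_pow_add_X_mul_C_X] at h
  simpa only [coeff₂_franel, Nat.cast_id] using h.symm
end
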